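/- arXiv:2605.15001 — 9 statements merged into one kernel-verified Lean document; each statement's English description precedes it below -/
import Mathlib

section
/- Soundness of the dRL sequential composition refinement axiom (;_≤): let α, β, γ, δ be relations on states and let s be a state. If α refines γ at s (i.e., ∀ t, α s t → γ s t), and for every state t reachable from s by α the relation β refines δ at t (i.e., ∀ t, α s t → ∀ u, β t u → δ t u), then the composition α;β refines γ;δ at s, i.e., ∀ u, (Relation.Comp α β) s u → (Relation.Comp γ δ) s u. -/
theorem drl_seq_refinement_sound {V : Type*}
    (α β γ δ : (V → ℝ) → (V → ℝ) → Prop) (s : V → ℝ)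
    (h1 : ∀ t, α s t → γ s t)
    (h2 : ∀ t, α s t → ∀ u, β t u → δ t u) :
    ∀ u, Relation.Comp α β s u → Relation.Comp γ δ s u :=
  fun u ⟨t, hα, hβ⟩ => ⟨t, h1 t hα, h2 t hα u hβ⟩
end

section
/- Soundness of the dRL left loop refinement axiom (loop_l): let α, β be relations on states and let s be a state. If for every state t reachable from s by the loop α* the composition α;β refines β at t (i.e., ∀ t, Relation.ReflTransGen α s t → ∀ u, (Relation.Comp α β) t u → β t u), then the composition α*;β refines β at s, i.e., ∀ u, (Relation.Comp (Relation.ReflTransGen α) β) s u → β s u. -/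
namespace Relation

theorem of_comp_reflTransGen {σ : Type*} {α β : σ → σ → Prop} {s : σ}
    (h : ∀ t, ReflTransGen α s t → ∀ u, Comp α β t u → β t u) {u : σ}
    (hu : Comp (ReflTransGen α) β s u) : β s u := by
  obtain ⟨t, hst, htu⟩ := hu
  induction hst with
  | refl => exact htu
  | tail hsr hrt ih => exact ih (h _ hsr u ⟨_, hrt, htu⟩)

end Relation

theorem drl_loop_left_sound {V : Type*}
    (α β : (V → ℝ) → (V → ℝ) → Prop) (s : V → ℝ)
    (h : ∀ t, Relation.ReflTransGen α s t → ∀ u, Relation.Comp α β t u → β t u) :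
    ∀ u, Relation.Comp (Relation.ReflTransGen α) β s u → β s u :=
  fun _ => Relation.of_comp_reflTransGen h
end

section
/- Soundness of the dRL right loop refinement axiom (loop_r): let α, β be relations on states and let s be a state. If the composition α;β refines α at s (i.e., ∀ u, (Relation.Comp α β) s u → α s u), then the composition α;β* refines α at s, i.e., ∀ u, (Relation.Comp α (Relation.ReflTransGen β)) s u → α s u. -/
theorem Relation.ReflTransGen.preserves {σ : Type*} {r : σ → σ → Prop} {P : σ → Prop}
    (hP : ∀ ⦃a b⦄, r a b → P a → P b) {a b : σ} (hab : ReflTransGen r a b) : P a → P b := by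
  induction hab with
  | refl => exact id
  | tail _ hbc ih => exact hP hbc ∘ ih

theorem drl_loop_right_sound {V : Type*}
    (α β : (V → ℝ) → (V → ℝ) → Prop) (s : V → ℝ)
    (h : ∀ u, Relation.Comp α β s u → α s u) :
    ∀ u, Relation.Comp α (Relation.ReflTransGen β) s u → α s u := by
  rintro u ⟨t, hst, htu⟩
  -- reachability from `s` by `α` is an invariant of `β`-steps
  exact htu.preserves (fun t' u' hβ hα => h u' ⟨t', hα, hβ⟩) hst
end

section
/- Soundness of the dRL update axiom (:=): let V be a type of variables with decidable equality, x : V, and let e be a function from states to ℝ that does not depend on x (i.e., ∀ s r, e (Function.update s x r) = e s). Then the deterministic assignment x := e equals the composition of the nondeterministic assignment x := * with the test ?(x = e); that is, as relations on states, (fun s t => t = Function.update s x (e s)) = Relation.Comp (fun s t => ∃ r : ℝ, t = Function.update s x r) (fun s t => s = t ∧ s x = e s). -/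
-- Since `e` ignores `x`, the test `x = e` may be evaluated in the pre-state.
theorem Relation.comp_update_test_iff {V α : Type*} [DecidableEq V] {x : V}
    {e : (V → α) → α} (he : ∀ s r, e (Function.update s x r) = e s) (s t : V → α) :
    Relation.Comp (fun s t => ∃ r, t = Function.update s x r) (fun s t => s = t ∧ s x = e s) s t ↔
      t = Function.update s x (e s) := by
  constructor
  · rintro ⟨_, ⟨r, rfl⟩, rfl, hr⟩
    rw [Function.update_self, he] at hr
    rw [hr]
  · rintro rfl
    exact ⟨_, ⟨e s, rfl⟩, rfl, by rw [Function.update_self, he]⟩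

theorem drl_update_axiom_sound {V : Type*} [DecidableEq V] (x : V)
    (e : (V → ℝ) → ℝ)
    (he : ∀ (s : V → ℝ) (r : ℝ), e (Function.update s x r) = e s) :
    (fun s t : V → ℝ => t = Function.update s x (e s)) =
      Relation.Comp (fun s t : V → ℝ => ∃ r : ℝ, t = Function.update s x r)
        (fun s t : V → ℝ => s = t ∧ s x = e s) := by
  funext s t
  exact propext (Relation.comp_update_test_iff he s t).symm
end

section
/- Soundness of the dRL axiom merging a random assignment sandwiching a test (:*_merge): for any variable x and any predicate P on states, the program x := *; ?P; x := * equals the program x := *; ?(∃ y, P[y/x]); that is, as relations on states, Relation.Comp (Relation.Comp (fun s t => ∃ r : ℝ, t = Function.update s x r) (fun s t => s = t ∧ P s)) (fun s t => ∃ r : ℝ, t = Function.update s x r) = Relation.Comp (fun s t => ∃ r : ℝ, t = Function.update s x r) (fun s t => s = t ∧ ∃ r : ℝ, P (Function.update s x r)). -/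
/-!
Random assignment `x := *` relates exactly the states that agree off `x`, so it is an equivalence
relation `~`. For any equivalence, `~; ?P; ~` relates `s` to `t` iff `s ~ t` and some state `u ~ t`
satisfies `P`, i.e. it equals `~; ?(fun t => ∃ u, t ~ u ∧ P u)`; for `x := *` that test is
`∃ y, P[y/x]`.
-/

namespace Relation

variable {α : Type*}

def test (P : α → Prop) (s t : α) : Prop := s = t ∧ P s

theorem comp_test_comp_of_equivalence {r : α → α → Prop} (hr : Equivalence r) (P : α → Prop) :
    Comp (Comp r (test P)) r = Comp r (test fun s => ∃ u, r s u ∧ P u) := by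
  funext s t
  apply propext
  constructor
  · rintro ⟨_, ⟨u, hsu, rfl, hu⟩, hut⟩
    exact ⟨t, hr.trans hsu hut, rfl, u, hr.symm hut, hu⟩
  · rintro ⟨v, hsv, rfl, u, hvu, hu⟩
    exact ⟨u, ⟨u, hr.trans hsv hvu, rfl, hu⟩, hr.symm hvu⟩

end Relation

section RandomAssign

variable {V α : Type*} [DecidableEq V]

def randomAssign (x : V) (s t : V → α) : Prop := ∃ r, t = Function.update s x r

theorem randomAssign_equivalence (x : V) : Equivalence (randomAssign (α := α) x) where
  refl s := ⟨s x, (Function.update_eq_self x s).symm⟩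
  symm := by
    rintro s _ ⟨r, rfl⟩
    exact ⟨s x, by rw [Function.update_idem, Function.update_eq_self]⟩
  trans := by
    rintro s _ _ ⟨r, rfl⟩ ⟨r', rfl⟩
    exact ⟨r', Function.update_idem _ _ _⟩

theorem exists_randomAssign_and_iff (x : V) (P : (V → α) → Prop) (s : V → α) :
    (∃ u, randomAssign x s u ∧ P u) ↔ ∃ r, P (Function.update s x r) :=
  ⟨fun ⟨_, ⟨r, hu⟩, hP⟩ => ⟨r, hu ▸ hP⟩, fun ⟨r, hP⟩ => ⟨_, ⟨r, rfl⟩, hP⟩⟩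

end RandomAssign

theorem drl_random_test_merge_sound {V : Type*} [DecidableEq V] (x : V)
    (P : (V → ℝ) → Prop) :
    Relation.Comp
        (Relation.Comp (fun s t : V → ℝ => ∃ r : ℝ, t = Function.update s x r)
          (fun s t : V → ℝ => s = t ∧ P s))
        (fun s t : V → ℝ => ∃ r : ℝ, t = Function.update s x r) =
      Relation.Comp (fun s t : V → ℝ => ∃ r : ℝ, t = Function.update s x r)
        (fun s t : V → ℝ => s = t ∧ ∃ r : ℝ, P (Function.update s x r)) := by
  have merge := Relation.comp_test_comp_of_equivalence (randomAssign_equivalence x) P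
  simp only [exists_randomAssign_and_iff] at merge
  exact merge
end

section
/- Soundness of the dRL axiom :=*_swap (commutation of a fresh nondeterministic assignment with a program): let x be a variable and α a relation on states such that (bound effect) ∀ s t, α s t → s x = t x, and (coincidence) ∀ s t (r : ℝ), α s t ↔ α (Function.update s x r) (Function.update t x r). Then x := *; α equals α; x := * as relations on states: Relation.Comp (fun s t => ∃ r : ℝ, t = Function.update s x r) α = Relation.Comp α (fun s t => ∃ r : ℝ, t = Function.update s x r). -/
/-! Coincidence alone lets the random choice of `x` move across `α`: resetting `x` to `s x` on both
sides shows that `α (s[x ↦ r]) t` holds iff `α s (t[x ↦ s x])`, and `t` is `t[x ↦ s x]` with `x`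
randomized again. -/

open Function

section

variable {V β : Type*} [DecidableEq V] {x : V} {α : (V → β) → (V → β) → Prop}

theorem rel_update_left_iff
    (hcoinc : ∀ s t r, α s t ↔ α (update s x r) (update t x r)) (s t : V → β) (r : β) :
    α (update s x r) t ↔ α s (update t x (s x)) := by
  rw [hcoinc _ _ (s x), update_idem, update_eq_self]

theorem comp_randomize_eq_comp_randomize
    (hcoinc : ∀ s t r, α s t ↔ α (update s x r) (update t x r)) :
    Relation.Comp (fun s t => ∃ r, t = update s x r) α =
      Relation.Comp α (fun s t => ∃ r, t = update s x r) := by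
  ext s t
  constructor
  · rintro ⟨_, ⟨r, rfl⟩, hα⟩
    exact ⟨update t x (s x), (rel_update_left_iff hcoinc s t r).1 hα, t x, by simp⟩
  · rintro ⟨u, hα, r, rfl⟩
    exact ⟨update s x r, ⟨r, rfl⟩, (hcoinc s u r).1 hα⟩

end

theorem drl_random_swap_sound_general {V : Type*} [DecidableEq V] (x : V)
    (α : (V → ℝ) → (V → ℝ) → Prop)
    (hcoinc : ∀ s t (r : ℝ),
      α s t ↔ α (Function.update s x r) (Function.update t x r)) :
    Relation.Comp (fun s t : V → ℝ => ∃ r : ℝ, t = Function.update s x r) α =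
      Relation.Comp α (fun s t : V → ℝ => ∃ r : ℝ, t = Function.update s x r) :=
  comp_randomize_eq_comp_randomize hcoinc

theorem drl_random_swap_sound {V : Type*} [DecidableEq V] (x : V)
    (α : (V → ℝ) → (V → ℝ) → Prop)
    (hbound : ∀ s t, α s t → s x = t x)
    (hcoinc : ∀ s t (r : ℝ),
      α s t ↔ α (Function.update s x r) (Function.update t x r)) :
    Relation.Comp (fun s t : V → ℝ => ∃ r : ℝ, t = Function.update s x r) α =
      Relation.Comp α (fun s t : V → ℝ => ∃ r : ℝ, t = Function.update s x r) :=
  drl_random_swap_sound_general x α hcoinc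
end

section
/- Semantic version of the auxiliary ghost lemma (Lemma C.2): let x be a variable and α a relation on states such that x is not read by α, in the sense that ∀ s t (r : ℝ), α s t → ∃ t', α (Function.update s x r) t' ∧ ∀ y ≠ x, t' y = t y. Then x := *; α; x := * equals α; x := * as relations on states: Relation.Comp (fun s t => ∃ r : ℝ, t = Function.update s x r) (Relation.Comp α (fun s t => ∃ r : ℝ, t = Function.update s x r)) = Relation.Comp α (fun s t => ∃ r : ℝ, t = Function.update s x r). -/
open Function

section Havoc

variable {V β : Type*} [DecidableEq V]

/-- The nondeterministic assignment `x := *`. -/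
def havoc (x : V) (s t : V → β) : Prop :=
  ∃ r, t = update s x r

theorem havoc_iff {x : V} {s t : V → β} : havoc x s t ↔ ∀ y ≠ x, t y = s y := by
  constructor
  · rintro ⟨r, rfl⟩ y hy
    exact update_of_ne hy r s
  · intro h
    exact ⟨t x, ((update_eq_iff).2 ⟨rfl, fun y hy => (h y hy).symm⟩).symm⟩

theorem havoc_refl (x : V) (s : V → β) : havoc x s s :=
  ⟨s x, (update_eq_self x s).symm⟩

end Havoc

theorem drl_ghost_aux_sound {V : Type*} [DecidableEq V] (x : V)
    (α : (V → ℝ) → (V → ℝ) → Prop)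
    (hnotread : ∀ s t (r : ℝ), α s t →
      ∃ t', α (Function.update s x r) t' ∧ ∀ y ≠ x, t' y = t y) :
    Relation.Comp (fun s t : V → ℝ => ∃ r : ℝ, t = Function.update s x r)
        (Relation.Comp α (fun s t : V → ℝ => ∃ r : ℝ, t = Function.update s x r)) =
      Relation.Comp α (fun s t : V → ℝ => ∃ r : ℝ, t = Function.update s x r) := by
  change Relation.Comp (havoc x) (Relation.Comp α (havoc x)) = Relation.Comp α (havoc x)
  funext s t
  apply propext
  constructor
  · rintro ⟨_, ⟨r, rfl⟩, v, hαv, hvt⟩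
    -- Rerun `α` from `s` itself: resetting `x` to `s x` undoes the first havoc.
    obtain ⟨t', hαt', ht'v⟩ := hnotread _ v (s x) hαv
    rw [update_idem, update_eq_self] at hαt'
    exact ⟨t', hαt', havoc_iff.2 fun y hy => (havoc_iff.1 hvt y hy).trans (ht'v y hy).symm⟩
  · rintro ⟨v, hαv, hvt⟩
    exact ⟨s, havoc_refl x s, v, hαv, hvt⟩
end

section
/- Semantic version of the loop case of Lemma 2 (local refinement under a loop with a projective context): let α, β, δ be relations on states and s a state. If for every state t reachable from s by the loop (α;δ)* the relation α refines β at t (i.e., ∀ t, Relation.ReflTransGen (Relation.Comp α δ) s t → ∀ u, α t u → β t u), then the loop (α;δ)* refines the loop (β;δ)* at s: ∀ u, Relation.ReflTransGen (Relation.Comp α δ) s u → Relation.ReflTransGen (Relation.Comp β δ) s u. -/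
namespace Relation

variable {α : Type*} {r p : α → α → Prop} {a b : α}

theorem ReflTransGen.mono_of_reachable (hrp : ∀ x y, ReflTransGen r a x → r x y → p x y)
    (hab : ReflTransGen r a b) : ReflTransGen p a b := by
  induction hab with
  | refl => exact .refl
  | tail hax hxy ih => exact ih.tail (hrp _ _ hax hxy)

end Relation

theorem drl_local_loop_refinement_sound {V : Type*}
    (α β δ : (V → ℝ) → (V → ℝ) → Prop) (s : V → ℝ)
    (h : ∀ t, Relation.ReflTransGen (Relation.Comp α δ) s t → ∀ u, α t u → β t u) :
    ∀ u, Relation.ReflTransGen (Relation.Comp α δ) s u →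
      Relation.ReflTransGen (Relation.Comp β δ) s u := fun _ =>
  Relation.ReflTransGen.mono_of_reachable fun t _ hst ⟨m, hαm, hδm⟩ => ⟨m, h t hst m hαm, hδm⟩
end

section
/- Core analytic fact underlying the soundness of the differential ghost axiom ≡_dG (Lemma 3): for any continuous functions a, b : ℝ → ℝ, any t₀ : ℝ, and any initial value x₀ : ℝ, there exists a function x : ℝ → ℝ with x t₀ = x₀ such that for every t : ℝ, x has derivative a t * x t + b t at t (HasDerivAt x (a t * x t + b t) t); i.e., the linear differential equation x' = a(t)·x + b(t) has a global solution through any initial condition. -/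
/-!
Variation of constants: with `A t = ∫_{t₀}^t a` and integrating factor `exp (-A)`, the function
`x t = exp (A t) * (x₀ + ∫_{t₀}^t exp (-A s) * b s ds)` is defined on all of `ℝ` and solves the
equation, since continuity of `a` and `b` makes both primitives differentiable everywhere.
-/

open Real

theorem hasDerivAt_exp_mul_of_hasDerivAt {A B : ℝ → ℝ} {α β t : ℝ} (hA : HasDerivAt A α t)
    (hB : HasDerivAt B (exp (-A t) * β) t) :
    HasDerivAt (fun s => exp (A s) * B s) (α * (exp (A t) * B t) + β) t := by
  refine (hA.exp.mul hB).congr_deriv ?_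
  rw [exp_neg]
  field_simp

theorem linear_ode_global_solution (a b : ℝ → ℝ)
    (ha : Continuous a) (hb : Continuous b) (t₀ x₀ : ℝ) :
    ∃ x : ℝ → ℝ, x t₀ = x₀ ∧ ∀ t : ℝ, HasDerivAt x (a t * x t + b t) t := by
  set A : ℝ → ℝ := fun t => ∫ s in t₀..t, a s
  have hA : Continuous A :=
    intervalIntegral.continuous_primitive (fun _ _ => ha.intervalIntegrable _ _) t₀
  have hforcing : Continuous fun s => exp (-A s) * b s := hA.neg.rexp.mul hb
  refine ⟨fun t => exp (A t) * (x₀ + ∫ s in t₀..t, exp (-A s) * b s), by simp [A], fun t => ?_⟩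
  exact hasDerivAt_exp_mul_of_hasDerivAt (ha.integral_hasStrictDerivAt t₀ t).hasDerivAt
    ((hforcing.integral_hasStrictDerivAt t₀ t).hasDerivAt.const_add x₀)
end
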